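/- If two or more of the quantities among d_1,…,d_n, c are negative, then the matrix D + c·1 1^T is not positive definite (the equilibrium is unstable). -/

import Mathlib

/-!
Testing a positive definite matrix `A` against `eᵢ` and `eᵢ - eⱼ` shows `0 < Aᵢᵢ` and
`0 < Aᵢᵢ + Aⱼⱼ - Aᵢⱼ - Aⱼᵢ`. For `A = D + c·𝟙𝟙ᵀ` these quantities are `dᵢ + c` and `dᵢ + dⱼ`,
so neither two negative `dᵢ` nor a negative `dᵢ` together with a negative `c` is possible.
-/

open Matrix

theorem Matrix.PosDef.diag_add_diag_sub_pos {n R : Type*} [Fintype n] [DecidableEq n]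
    [Ring R] [PartialOrder R] [StarRing R] [Nontrivial R] {A : Matrix n n R} (hA : A.PosDef)
    {i j : n} (hij : i ≠ j) : 0 < A i i + A j j - A i j - A j i := by
  have hx : (Pi.single i 1 - Pi.single j 1 : n → R) ≠ 0 := by
    intro h
    simpa [hij] using congrFun h i
  have hpos := hA.dotProduct_mulVec_pos hx
  simp only [star_sub, Pi.star_single, star_one, mulVec_sub, mulVec_single, MulOpposite.op_one,
    one_smul, dotProduct_sub, sub_dotProduct, single_dotProduct, col_apply, one_mul] at hpos
  convert hpos using 1
  abel

theorem diagonal_plus_rank_one_not_posdef_of_two_negatives (n : ℕ)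
    (d : Fin n → ℝ) (c : ℝ)
    (h : (∃ i j : Fin n, i ≠ j ∧ d i < 0 ∧ d j < 0) ∨ (c < 0 ∧ ∃ i, d i < 0)) :
    ¬ (Matrix.diagonal d + Matrix.of fun _ _ : Fin n => c).PosDef := by
  intro hA
  rcases h with ⟨i, j, hij, hi, hj⟩ | ⟨hc, i, hi⟩
  · have hpos := hA.diag_add_diag_sub_pos hij
    simp only [Matrix.add_apply, diagonal_apply_eq, diagonal_apply_ne _ hij,
      diagonal_apply_ne _ hij.symm, of_apply] at hpos
    linarith
  · have hpos := hA.diag_pos (i := i)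
    simp only [Matrix.add_apply, diagonal_apply_eq, of_apply] at hpos
    linarith
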